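/- If a rectangular complex interval z = [u₁,u₂] + i[v₁,v₂] contains 0, then the minimum of the modulus over z equals 0, and the range of the modulus over z equals [0, max A] where A is the set of moduli of the four vertices. -/

import Mathlib

theorem modulus_range_zero_in_box (u₁ u₂ v₁ v₂ : ℝ)
    (hu₁ : u₁ ≤ 0) (hu₂ : 0 ≤ u₂) (hv₁ : v₁ ≤ 0) (hv₂ : 0 ≤ v₂) :
    (fun w : ℂ => ‖w‖) '' {w : ℂ | w.re ∈ Set.Icc u₁ u₂ ∧ w.im ∈ Set.Icc v₁ v₂} =
      Set.Icc 0 (max (max ‖(⟨u₁, v₁⟩ : ℂ)‖ ‖(⟨u₂, v₁⟩ : ℂ)‖)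
                     (max ‖(⟨u₁, v₂⟩ : ℂ)‖ ‖(⟨u₂, v₂⟩ : ℂ)‖)) := by
  set S : Set ℂ := {w : ℂ | w.re ∈ Set.Icc u₁ u₂ ∧ w.im ∈ Set.Icc v₁ v₂} with hS
  set M : ℝ := max (max (‖(⟨u₁, v₁⟩ : ℂ)‖) (‖(⟨u₂, v₁⟩ : ℂ)‖))
                   (max (‖(⟨u₁, v₂⟩ : ℂ)‖) (‖(⟨u₂, v₂⟩ : ℂ)‖)) with hM
  have habs : ∀ u v : ℝ, ‖(⟨u, v⟩ : ℂ)‖ = Real.sqrt (u * u + v * v) := by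
    intro u v
    rw [Complex.norm_def, Complex.normSq_mk]
  have hcorner : ∀ u v : ℝ, u₁ ≤ u → u ≤ u₂ → v₁ ≤ v → v ≤ v₂ →
      (⟨u, v⟩ : ℂ) ∈ S := by
    intro u v h1 h2 h3 h4
    exact ⟨⟨h1, h2⟩, ⟨h3, h4⟩⟩
  apply Set.Subset.antisymm
  · rintro r ⟨w, hw, rfl⟩
    refine ⟨norm_nonneg w, ?_⟩
    obtain ⟨⟨hre1, hre2⟩, ⟨him1, him2⟩⟩ := hw
    have h1 : w.re * w.re ≤ max (u₁ * u₁) (u₂ * u₂) := by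
      rcases le_or_gt w.re 0 with h | h
      · exact le_max_of_le_left (by nlinarith)
      · exact le_max_of_le_right (by nlinarith)
    have h2 : w.im * w.im ≤ max (v₁ * v₁) (v₂ * v₂) := by
      rcases le_or_gt w.im 0 with h | h
      · exact le_max_of_le_left (by nlinarith)
      · exact le_max_of_le_right (by nlinarith)
    have key : ∀ u v : ℝ, w.re * w.re ≤ u * u → w.im * w.im ≤ v * v →
        ‖w‖ ≤ ‖(⟨u, v⟩ : ℂ)‖ := by
      intro u v hu hv
      rw [habs, Complex.norm_def, Complex.normSq_apply]
      exact Real.sqrt_le_sqrt (by linarith)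
    rcases le_max_iff.mp (le_refl (max (u₁ * u₁) (u₂ * u₂))) with _ | _
    all_goals {
      rcases max_cases (u₁ * u₁) (u₂ * u₂) with ⟨he, _⟩ | ⟨he, _⟩ <;>
      rcases max_cases (v₁ * v₁) (v₂ * v₂) with ⟨hf, _⟩ | ⟨hf, _⟩ <;>
      rw [he] at h1 <;> rw [hf] at h2
      · exact le_trans (key _ _ h1 h2) (le_max_of_le_left (le_max_left _ _))
      · exact le_trans (key _ _ h1 h2) (le_max_of_le_right (le_max_left _ _))
      · exact le_trans (key _ _ h1 h2) (le_max_of_le_left (le_max_right _ _))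
      · exact le_trans (key _ _ h1 h2) (le_max_of_le_right (le_max_right _ _)) }
  · have hconv : Convex ℝ S := by
      intro x hx y hy a b ha hb hab
      constructor
      · have := (convex_Icc u₁ u₂) hx.1 hy.1 ha hb hab
        simpa [Complex.add_re, Complex.smul_re] using this
      · have := (convex_Icc v₁ v₂) hx.2 hy.2 ha hb hab
        simpa [Complex.add_im, Complex.smul_im] using this
    have hpre : IsPreconnected ((fun w : ℂ => ‖w‖) '' S) :=
      (hconv.isPreconnected).image _ (continuous_norm.continuousOn)
    have h0 : (0 : ℝ) ∈ (fun w : ℂ => ‖w‖) '' S := by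
      refine ⟨0, ⟨⟨hu₁, hu₂⟩, ⟨hv₁, hv₂⟩⟩, by simp⟩
    have hMmem : M ∈ (fun w : ℂ => ‖w‖) '' S := by
      have c1 : ‖(⟨u₁, v₁⟩ : ℂ)‖ ∈ (fun w : ℂ => ‖w‖) '' S :=
        ⟨_, hcorner u₁ v₁ le_rfl (le_trans hu₁ hu₂) le_rfl (le_trans hv₁ hv₂), rfl⟩
      have c2 : ‖(⟨u₂, v₁⟩ : ℂ)‖ ∈ (fun w : ℂ => ‖w‖) '' S :=
        ⟨_, hcorner u₂ v₁ (le_trans hu₁ hu₂) le_rfl le_rfl (le_trans hv₁ hv₂), rfl⟩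
      have c3 : ‖(⟨u₁, v₂⟩ : ℂ)‖ ∈ (fun w : ℂ => ‖w‖) '' S :=
        ⟨_, hcorner u₁ v₂ le_rfl (le_trans hu₁ hu₂) (le_trans hv₁ hv₂) le_rfl, rfl⟩
      have c4 : ‖(⟨u₂, v₂⟩ : ℂ)‖ ∈ (fun w : ℂ => ‖w‖) '' S :=
        ⟨_, hcorner u₂ v₂ (le_trans hu₁ hu₂) le_rfl (le_trans hv₁ hv₂) le_rfl, rfl⟩
      rw [hM]
      rcases max_choice (max (‖(⟨u₁, v₁⟩ : ℂ)‖) (‖(⟨u₂, v₁⟩ : ℂ)‖))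
          (max (‖(⟨u₁, v₂⟩ : ℂ)‖) (‖(⟨u₂, v₂⟩ : ℂ)‖)) with h | h <;> rw [h]
      · rcases max_choice (‖(⟨u₁, v₁⟩ : ℂ)‖) (‖(⟨u₂, v₁⟩ : ℂ)‖) with h' | h' <;>
          rw [h'] <;> assumption
      · rcases max_choice (‖(⟨u₁, v₂⟩ : ℂ)‖) (‖(⟨u₂, v₂⟩ : ℂ)‖) with h' | h' <;>
          rw [h'] <;> assumption
    exact hpre.Icc_subset h0 hMmem
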